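/- The map ι_X(σ) = σ{σ̌} + v{x²_σ} + w{y²_σ}, for a 1-simplex σ from v to w, satisfies ∂(ι_X(σ)) = w·id_w − v·id_v in the coHochschild complex of 𝒞(X̃), where ∂ is the coHochschild differential. -/
import Mathlib


/-!
STATEMENT 15: The map `ι_X(σ) = σ{σ̌} + v{x²_σ} + w{y²_σ}`, for a 1-simplex `σ` from `v` to `w`,
satisfies `∂(ι_X(σ)) = w·id_w − v·id_v` in the coHochschild complex of `𝒞(X̃)`, where `∂` is the
coHochschild differential.

The coHochschild complex is realized as `C ⊗ ΩC` with `ΩC` the tensor algebra on the (shifted)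
coaugmentation coideal: `gen = ι ∘ q` with `q` the projection killing the vertices; the
coHochschild differential is `∂ = d ⊗ id + id ⊗ D + τ` with `τ` the wrap-around terms from the
coproduct of the marked factor.  The data of the simplices `v, w, σ, σ̌, x²_σ, y²_σ` of `X̃`
enters through hypotheses recording their coproducts, differentials, parities and curvature
values, exactly as listed in the paper.  The identities `id_v, id_w` are the empty words, so
`v·id_v = v ⊗ 1` and `w·id_w = w ⊗ 1`.
-/

open TensorProduct

/-- Parity automorphism of the cobar construction induced by the parity operator `-εC` of the
shifted generators. -/
noncomputable def parityHom {R : Type*} [CommRing R] {C : Type*} [AddCommGroup C] [Module R C]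
    (ε : C →ₗ[R] C) : TensorAlgebra R C →ₐ[R] TensorAlgebra R C :=
  TensorAlgebra.lift R ((TensorAlgebra.ι R (M := C)) ∘ₗ ε)

variable (R : Type*) [CommRing R] (C : Type*) [AddCommGroup C] [Module R C]

/-- The bead inclusion `C → ΩC`. -/
noncomputable def gen (q : C →ₗ[R] C) : C →ₗ[R] TensorAlgebra R C :=
  (TensorAlgebra.ι R (M := C)) ∘ₗ q

/-- The coHochschild differential `∂ = d ⊠ id + id ⊠ d_{ΩC} + τ` on `coCH(𝒞(X̃)) = C ⊗ ΩC`,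
with `τ` the wrap-around terms `−(−1)^{c⁽¹⁾} c⁽¹⁾ ⊗ {c⁽²⁾}·a ± c⁽²⁾ ⊗ a·{c⁽¹⁾}` (Koszul signs
via the parity operator `εC` and the parity `parityHom (-εC)` of `ΩC`). -/
noncomputable def coHochDiff (εC : C →ₗ[R] C) (q : C →ₗ[R] C) (d : C →ₗ[R] C)
    (Δ : C →ₗ[R] C ⊗[R] C) (D : TensorAlgebra R C →ₗ[R] TensorAlgebra R C) :
    C ⊗[R] TensorAlgebra R C →ₗ[R] C ⊗[R] TensorAlgebra R C :=
  TensorProduct.map d LinearMap.id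
  + TensorProduct.map εC D
  - (TensorProduct.map εC
        ((LinearMap.mul' R (TensorAlgebra R C)) ∘ₗ
          TensorProduct.map (gen R C q) LinearMap.id)
      ∘ₗ (TensorProduct.assoc R C C (TensorAlgebra R C)).toLinearMap
      ∘ₗ TensorProduct.map Δ LinearMap.id)
  + (TensorProduct.map εC
        ((LinearMap.mul' R (TensorAlgebra R C)) ∘ₗ
          TensorProduct.map (parityHom (-εC)).toLinearMap (gen R C q) ∘ₗ
          (TensorProduct.comm R C (TensorAlgebra R C)).toLinearMap)
      ∘ₗ (TensorProduct.assoc R C C (TensorAlgebra R C)).toLinearMap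
      ∘ₗ TensorProduct.map ((TensorProduct.comm R C C).toLinearMap ∘ₗ Δ) LinearMap.id)

theorem constant_loop_on_one_simplex_bounds
    (εC : C →ₗ[R] C) (q : C →ₗ[R] C) (d : C →ₗ[R] C) (Δ : C →ₗ[R] C ⊗[R] C) (η : C →ₗ[R] R)
    -- the cobar differential `D` on `Ω𝒞(X̃)`: signed derivation extending `d + Δ + η`
    (D : TensorAlgebra R C →ₗ[R] TensorAlgebra R C)
    (hD1 : D 1 = 0)
    (hDLeib : ∀ x y, D (x * y) = D x * y + (parityHom (-εC) x) * D y)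
    (hDgen : ∀ c : C, D (gen R C q c) =
        gen R C q (d c)
        + (LinearMap.mul' R (TensorAlgebra R C))
            (TensorProduct.map (gen R C q) (gen R C q) (Δ c))
        + algebraMap R (TensorAlgebra R C) (η c))
    -- the simplices `v, w, σ, σ̌ = y¹_σ, x²_σ, y²_σ` of `X̃`
    (v w σ σTick x2 y2 : C)
    -- parities
    (hεv : εC v = v) (hεw : εC w = w) (hεσ : εC σ = -σ) (hεσT : εC σTick = -σTick)
    (hεx2 : εC x2 = x2) (hεy2 : εC y2 = y2)
    -- the projection `q` onto the coaugmentation coideal kills the vertices only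
    (hqv : q v = 0) (hqw : q w = 0) (hqσ : q σ = σ) (hqσT : q σTick = σTick)
    (hqx2 : q x2 = x2) (hqy2 : q y2 = y2)
    -- the modified differential vanishes on all these generators
    (hdv : d v = 0) (hdw : d w = 0) (hdσ : d σ = 0) (hdσT : d σTick = 0)
    (hdx2 : d x2 = 0) (hdy2 : d y2 = 0)
    -- the Alexander–Whitney coproducts, as given
    (hΔv : Δ v = v ⊗ₜ[R] v) (hΔw : Δ w = w ⊗ₜ[R] w)
    (hΔσ : Δ σ = v ⊗ₜ[R] σ + σ ⊗ₜ[R] w)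
    (hΔσT : Δ σTick = w ⊗ₜ[R] σTick + σTick ⊗ₜ[R] v)
    (hΔx2 : Δ x2 = v ⊗ₜ[R] x2 + σ ⊗ₜ[R] σTick + x2 ⊗ₜ[R] v)
    (hΔy2 : Δ y2 = w ⊗ₜ[R] y2 - σTick ⊗ₜ[R] σ + y2 ⊗ₜ[R] w)
    -- the curvature values
    (hηv : η v = 0) (hηw : η w = 0) (hησ : η σ = 0) (hησT : η σTick = 0)
    (hηx2 : η x2 = -1) (hηy2 : η y2 = 1) :
    -- conclusion: `∂(σ{σ̌} + v{x²_σ} + w{y²_σ}) = w·id_w − v·id_v`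
    coHochDiff R C εC q d Δ D
        (σ ⊗ₜ[R] gen R C q σTick + v ⊗ₜ[R] gen R C q x2 + w ⊗ₜ[R] gen R C q y2)
      = w ⊗ₜ[R] (1 : TensorAlgebra R C) - v ⊗ₜ[R] (1 : TensorAlgebra R C) := by
  have hP : ∀ c : C, (parityHom (-εC)).toLinearMap (TensorAlgebra.ι R c)
      = TensorAlgebra.ι R (-(εC c)) := by
    intro c
    simp [parityHom, TensorAlgebra.lift_ι_apply]
  have hgT : gen R C q σTick = TensorAlgebra.ι R σTick := by simp [gen, hqσT]
  have hgx : gen R C q x2 = TensorAlgebra.ι R x2 := by simp [gen, hqx2]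
  have hgy : gen R C q y2 = TensorAlgebra.ι R y2 := by simp [gen, hqy2]
  have hDσT : D (TensorAlgebra.ι R σTick) = 0 := by
    rw [← hgT, hDgen, hdσT, hΔσT, hησT]
    simp [gen, hqv, hqw, hqσT, LinearMap.mul'_apply]
  have hDx2 : D (TensorAlgebra.ι R x2)
      = TensorAlgebra.ι R σ * TensorAlgebra.ι R σTick - 1 := by
    rw [← hgx, hDgen, hdx2, hΔx2, hηx2]
    simp [gen, hqv, hqσ, hqσT, hqx2, LinearMap.mul'_apply]
    abel
  have hDy2 : D (TensorAlgebra.ι R y2)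
      = 1 - TensorAlgebra.ι R σTick * TensorAlgebra.ι R σ := by
    rw [← hgy, hDgen, hdy2, hΔy2, hηy2]
    simp [gen, hqw, hqσ, hqσT, hqy2, LinearMap.mul'_apply]
    abel
  simp only [coHochDiff, LinearMap.add_apply, LinearMap.sub_apply, LinearMap.coe_comp,
    Function.comp_apply, map_add, TensorProduct.map_tmul, LinearMap.id_coe, id_eq,
    hdσ, hdv, hdw, hΔσ, hΔv, hΔw, hεσ, hεv, hεw, hDσT, hDx2, hDy2,
    TensorProduct.add_tmul, TensorProduct.sub_tmul, TensorProduct.neg_tmul,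
    TensorProduct.tmul_sub, TensorProduct.tmul_add, TensorProduct.tmul_neg,
    TensorProduct.zero_tmul, TensorProduct.tmul_zero,
    LinearEquiv.coe_coe, TensorProduct.assoc_tmul, TensorProduct.comm_tmul,
    LinearMap.mul'_apply, hP, hεσT, gen, LinearMap.comp_apply,
    hqv, hqw, hqσ, hqσT, hqx2, hqy2, map_zero, map_neg, zero_mul, mul_zero,
    neg_neg, mul_one, one_mul]
  abel
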